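/- arXiv:1302.3759 — 2 statements merged into one kernel-verified Lean document; each statement's English description precedes it below -/
import Mathlib

section
/- Let θ be the 'Kakutani' substitution θ(0) = 001, θ(1) = 11001, with fixed points u* = θ^∞(0), v* = θ^∞(1). Then the coincidence density δ_c = lim_{n→∞} (1/n)·Card{1 ≤ k ≤ n : u*_k = v*_k} exists and equals 1/2. -/
/-!
The discrepancy `D n = #1 - #0` among the first `n` letters of a fixed point of `θK` is unchanged
by desubstitution, `D (blockStart m) = D m`, since `(-1, 1)` is a left eigenvector of the
substitution matrix for its eigenvalue `1`. Blocks have length between `3` and `5`, so iterating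
gives `|D n| = O(log n)`. The signed count of equal neighbours along a block equals the sign of
the next letter, so it is controlled by `D` as well. Finally `v = 1 u₂ u₃ …`, so `u` and `v`
coincide at `k ≥ 1` exactly when `u k = u (k + 1)`: the coincidence count is `n / 2 + O(log n)`.
-/

open Filter

/-- A substitution on an alphabet `α`, extended to words by concatenation. -/
def substApply {α : Type*} (σ : α → List α) (w : List α) : List α := w.flatMap σ

/-- `x : ℕ → α` is the one-sided fixed point of the substitution `σ` starting with the
letter `a`:  every iterate `σᵏ(a)` is a prefix of `x`. -/
def IsFixPt {α : Type*} (σ : α → List α) (a : α) (x : ℕ → α) : Prop :=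
  ∀ k i (h : i < ((substApply σ)^[k] [a]).length), x i = ((substApply σ)^[k] [a])[i]

/-- The Kakutani substitution `θ(0) = 001`, `θ(1) = 11001`. -/
def θK : Bool → List Bool := fun b =>
  if b then [true, true, false, false, true] else [false, false, true]

open Finset Topology Asymptotics

theorem List.getElem?_flatMap_length_take_add {α β : Type*} (f : α → List β) {w : List α}
    {m j : ℕ} (hm : m < w.length) (hj : j < (f w[m]).length) :
    (w.flatMap f)[((w.take m).flatMap f).length + j]? = (f w[m])[j]? := by
  have hsplit : w.flatMap f = (w.take m).flatMap f ++ (f w[m] ++ (w.drop (m + 1)).flatMap f) := by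
    conv_lhs => rw [← List.take_append_drop m w, List.drop_eq_getElem_cons hm]
    rw [List.flatMap_append, List.flatMap_cons]
  rw [hsplit, List.getElem?_append_right (by omega), Nat.add_sub_cancel_left,
    List.getElem?_append_left hj]

theorem List.take_eq_map_range {α : Type*} {w : List α} {x : ℕ → α}
    (hx : ∀ i (hi : i < w.length), x i = w[i]) {m : ℕ} (hm : m ≤ w.length) :
    w.take m = (List.range m).map x := by
  refine List.ext_getElem (by simp [hm]) fun i hi _ => ?_
  rw [List.length_take] at hi
  rw [List.getElem_take, List.getElem_map, List.getElem_range, hx i (by omega)]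

section Substitution

variable {α : Type*} {σ : α → List α}

theorem two_mul_length_le_length_substApply (hσ : ∀ b, 1 < (σ b).length) (w : List α) :
    2 * w.length ≤ (substApply σ w).length := by
  induction w with
  | nil => simp [substApply]
  | cons b w ih =>
    have := hσ b
    simp only [substApply, List.flatMap_cons, List.length_append, List.length_cons] at ih ⊢
    omega

theorem lt_length_substApply_iterate (hσ : ∀ b, 1 < (σ b).length) (a : α) (k : ℕ) :
    k < ((substApply σ)^[k] [a]).length := by
  induction k with
  | zero => simp
  | succ k ih =>
    rw [Function.iterate_succ_apply']
    have := two_mul_length_le_length_substApply hσ ((substApply σ)^[k] [a])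
    omega

variable (σ) in
/-- Position in a fixed point `x` at which the image `σ (x m)` of its `m`-th letter starts. -/
def blockStart (x : ℕ → α) (m : ℕ) : ℕ := ∑ i ∈ range m, (σ (x i)).length

theorem blockStart_zero (x : ℕ → α) : blockStart σ x 0 = 0 := rfl

theorem blockStart_succ (x : ℕ → α) (m : ℕ) :
    blockStart σ x (m + 1) = blockStart σ x m + (σ (x m)).length :=
  sum_range_succ _ _

theorem mul_le_blockStart {c : ℕ} (hσ : ∀ b, c ≤ (σ b).length) (x : ℕ → α) (m : ℕ) :
    c * m ≤ blockStart σ x m := by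
  simpa [blockStart, mul_comm] using card_nsmul_le_sum (range m) _ c fun i _ => hσ (x i)

theorem exists_eq_blockStart_add (hσ : ∀ b, 0 < (σ b).length) (x : ℕ → α) (n : ℕ) :
    ∃ m r, n = blockStart σ x m + r ∧ r < (σ (x m)).length := by
  set m := Nat.findGreatest (fun m => blockStart σ x m ≤ n) n
  have hle : blockStart σ x m ≤ n :=
    Nat.findGreatest_spec (P := fun m => blockStart σ x m ≤ n) (Nat.zero_le n) (Nat.zero_le n)
  have hlt : n < blockStart σ x (m + 1) := by
    by_contra! h
    have := mul_le_blockStart (c := 1) hσ x (m + 1)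
    exact Nat.findGreatest_is_greatest (Nat.lt_succ_self m) (by omega) h
  refine ⟨m, n - blockStart σ x m, by omega, ?_⟩
  rw [blockStart_succ] at hlt
  omega

theorem IsFixPt.apply_zero {a : α} {x : ℕ → α} (hx : IsFixPt σ a x) : x 0 = a :=
  hx 0 0 (by simp)

theorem IsFixPt.apply_eq_of_getElem?_eq {a b : α} {x : ℕ → α} (hx : IsFixPt σ a x) {k i : ℕ}
    (h : ((substApply σ)^[k] [a])[i]? = some b) : x i = b := by
  obtain ⟨hi, rfl⟩ := List.getElem?_eq_some_iff.1 h
  exact hx k i hi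

/-- A fixed point is the concatenation of the images of its own letters. -/
theorem IsFixPt.apply_blockStart_add (hσ : ∀ b, 1 < (σ b).length) {a : α} {x : ℕ → α}
    (hx : IsFixPt σ a x) {m j : ℕ} (hj : j < (σ (x m)).length) :
    x (blockStart σ x m + j) = (σ (x m))[j] := by
  set w := (substApply σ)^[m] [a]
  have hm : m < w.length := lt_length_substApply_iterate hσ a m
  have hxm : x m = w[m] := hx m m hm
  have htake : ((w.take m).flatMap σ).length = blockStart σ x m := by
    rw [List.take_eq_map_range (hx m) hm.le, List.length_flatMap, List.map_map]
    rfl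
  refine hx.apply_eq_of_getElem?_eq (k := m + 1) ?_
  rw [Function.iterate_succ_apply', ← htake]
  simp only [hxm] at hj ⊢
  rw [substApply, List.getElem?_flatMap_length_take_add σ hm hj, List.getElem?_eq_getElem hj]

end Substitution

section SignedCount

variable (p : ℕ → Prop) [DecidablePred p]

def signedCount (n : ℕ) : ℝ := ∑ k ∈ range n, if p k then 1 else -1

theorem signedCount_add (a b : ℕ) :
    signedCount p (a + b) = signedCount p a + signedCount (fun j => p (a + j)) b :=
  sum_range_add _ _ _

theorem signedCount_succ (n : ℕ) :
    signedCount p (n + 1) = signedCount p n + if p n then 1 else -1 :=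
  sum_range_succ _ _

theorem abs_signedCount_le (n : ℕ) : |signedCount p n| ≤ n := by
  refine (abs_sum_le_sum_abs _ _).trans ?_
  simp [apply_ite]

theorem abs_signedCount_add_le (a b : ℕ) :
    |signedCount p (a + b)| ≤ |signedCount p a| + b := by
  rw [signedCount_add]
  exact (abs_add_le _ _).trans (by gcongr; exact abs_signedCount_le _ b)

theorem two_mul_card_filter_sub_eq_signedCount (n : ℕ) :
    2 * (#{k ∈ range n | p k} : ℝ) - n = signedCount p n := by
  have hn : (n : ℝ) = ∑ _k ∈ range n, 1 := by simp
  rw [signedCount, natCast_card_filter, mul_sum, hn, ← sum_sub_distrib]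
  refine sum_congr rfl fun k _ => ?_
  split_ifs <;> norm_num

theorem tendsto_card_filter_div_of_signedCount
    (h : Tendsto (fun n => signedCount p n / n) atTop (𝓝 0)) :
    Tendsto (fun n => (#{k ∈ range n | p k} : ℝ) / n) atTop (𝓝 (1 / 2)) := by
  have hlim := (h.const_mul (1 / 2)).const_add (1 / 2)
  rw [mul_zero, add_zero] at hlim
  refine hlim.congr' ?_
  filter_upwards [eventually_ne_atTop 0] with n hn
  rw [← two_mul_card_filter_sub_eq_signedCount]
  field_simp
  ring

end SignedCount

theorem abs_le_mul_log_add_two_of_descent {f : ℕ → ℝ} {b : ℕ} {c : ℝ} (hb : 1 < b)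
    (h0 : |f 0| ≤ c) (hstep : ∀ n, 0 < n → ∃ m, m * b ≤ n ∧ |f n| ≤ |f m| + c) (n : ℕ) :
    |f n| ≤ c * (Nat.log b n + 2) := by
  have hc : 0 ≤ c := (abs_nonneg _).trans h0
  induction n using Nat.strong_induction_on with
  | _ n ih =>
    rcases Nat.eq_zero_or_pos n with rfl | hn
    · simp only [Nat.log_zero_right, CharP.cast_eq_zero, zero_add]
      linarith
    obtain ⟨m, hmn, hfm⟩ := hstep n hn
    rcases Nat.eq_zero_or_pos m with rfl | hm
    · have : (0 : ℝ) ≤ c * Nat.log b n := by positivity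
      linarith
    have hlog : (Nat.log b m : ℝ) + 1 ≤ Nat.log b n := by
      have := Nat.log_mono_right (b := b) hmn
      rw [Nat.log_mul_base hb hm.ne'] at this
      exact_mod_cast this
    calc |f n| ≤ c * (Nat.log b m + 2) + c := by
          have : m < n := by nlinarith
          linarith [ih m this]
      _ = c * ((Nat.log b m + 1 : ℝ) + 2) := by ring
      _ ≤ c * (Nat.log b n + 2) := by gcongr

theorem isLittleO_natLog_natCast (b : ℕ) :
    (fun n : ℕ => (Nat.log b n : ℝ)) =o[atTop] (fun n : ℕ => (n : ℝ)) := by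
  have hlogb : (fun n : ℕ => Real.logb b n) =o[atTop] (fun n : ℕ => (n : ℝ)) :=
    Real.isLittleO_logb_id_atTop.comp_tendsto tendsto_natCast_atTop_atTop
  refine IsBigO.trans_isLittleO (IsBigO.of_bound 1 ?_) hlogb
  filter_upwards with n
  have h := Real.natLog_le_logb n b
  rw [Real.norm_of_nonneg (Nat.cast_nonneg _), one_mul,
    Real.norm_of_nonneg ((Nat.cast_nonneg _).trans h)]
  exact h

theorem tendsto_div_natCast_of_abs_le_log {f : ℕ → ℝ} {b : ℕ} {c d : ℝ}
    (hf : ∀ n, |f n| ≤ c * Nat.log b n + d) :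
    Tendsto (fun n => f n / n) atTop (𝓝 0) := by
  have hbound : (fun n : ℕ => c * (Nat.log b n : ℝ) + d) =o[atTop] (fun n : ℕ => (n : ℝ)) :=
    ((isLittleO_natLog_natCast b).const_mul_left c).add
      ((isLittleO_const_id_atTop d).comp_tendsto tendsto_natCast_atTop_atTop)
  refine (IsBigO.trans_isLittleO (IsBigO.of_bound 1 ?_) hbound).tendsto_div_nhds_zero
  filter_upwards with n
  rw [one_mul, Real.norm_eq_abs, Real.norm_eq_abs]
  exact (hf n).trans (le_abs_self _)

section Kakutani

variable {a : Bool} {u : ℕ → Bool}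

theorem three_le_length_θK (b : Bool) : 3 ≤ (θK b).length := by
  cases b <;> decide

theorem length_θK_le_five (b : Bool) : (θK b).length ≤ 5 := by
  cases b <;> decide

theorem one_lt_length_θK (b : Bool) : 1 < (θK b).length :=
  (three_le_length_θK b).trans_lt' (by norm_num)

theorem exists_eq_blockStart_θK_add (u : ℕ → Bool) (n : ℕ) :
    ∃ m r, n = blockStart θK u m + r ∧ r ≤ 4 ∧ 3 * m ≤ n := by
  obtain ⟨m, r, rfl, hr⟩ :=
    exists_eq_blockStart_add (fun b => (one_lt_length_θK b).trans_le' zero_le_one) u n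
  have := mul_le_blockStart three_le_length_θK u m
  have := length_θK_le_five (u m)
  exact ⟨m, r, rfl, by omega, by omega⟩

theorem IsFixPt.apply_blockStart_θK (hu : IsFixPt θK a u) (m : ℕ) :
    u (blockStart θK u m) = u m := by
  have h := hu.apply_blockStart_add one_lt_length_θK (m := m) (j := 0) (by cases u m <;> decide)
  cases hm : u m <;> simp_all [θK]

/-- Every image `θK b` has as many more `1`s than `0`s as the letter `b` itself, so the discrepancy
is invariant under desubstitution. -/
theorem IsFixPt.signedCount_blockStart_θK (hu : IsFixPt θK a u) (m : ℕ) :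
    signedCount (u · = true) (blockStart θK u m) = signedCount (u · = true) m := by
  induction m with
  | zero => rfl
  | succ m ih =>
    have hblock := fun j (hj : j < (θK (u m)).length) => hu.apply_blockStart_add one_lt_length_θK hj
    rw [blockStart_succ, signedCount_add, ih, signedCount_succ]
    congr 1
    cases hm : u m <;>
      simp only [θK, hm, Bool.false_eq_true, ↓reduceIte, List.length_cons, List.length_nil,
      zero_add, Nat.reduceAdd] at hblock ⊢
    all_goals
      have h0 := hblock 0 (by norm_num)
      rw [add_zero] at h0
      simp [signedCount, sum_range_succ, hblock, h0]

/-- Inside the blocks `001` and `11001` equal and unequal neighbours alternate; the last letter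
`1` of a block is followed by the first letter `u (m + 1)` of the next one. -/
theorem IsFixPt.signedCount_pairs_blockStart_θK (hu : IsFixPt θK a u) (m : ℕ) :
    signedCount (fun k => u k = u (k + 1)) (blockStart θK u m) =
      signedCount (u · = true) (m + 1) - signedCount (u · = true) 1 := by
  induction m with
  | zero => simp [blockStart_zero, signedCount]
  | succ m ih =>
    have hblock := fun j (hj : j < (θK (u m)).length) => hu.apply_blockStart_add one_lt_length_θK hj
    have hnext : u (blockStart θK u m + (θK (u m)).length) = u (m + 1) := by
      rw [← blockStart_succ]
      exact hu.apply_blockStart_θK _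
    rw [blockStart_succ, signedCount_add, ih, signedCount_succ _ (m + 1)]
    suffices signedCount (fun j => u (blockStart θK u m + j) = u (blockStart θK u m + j + 1))
        (θK (u m)).length = if u (m + 1) = true then 1 else -1 by
      rw [this]; ring
    cases hm : u m <;>
      simp only [θK, hm, Bool.false_eq_true, ↓reduceIte, List.length_cons, List.length_nil,
      zero_add, Nat.reduceAdd] at hblock hnext ⊢
    all_goals
      have h0 := hblock 0 (by norm_num)
      rw [add_zero] at h0
      simp [signedCount, sum_range_succ, hblock, h0, add_assoc, hnext]

/-- `θK 1 = 1 · 1001` and `θK 0 ++ θK 0 = 00 · 1001`. -/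
theorem exists_iterate_substApply_θK (k : ℕ) : ∃ t r,
    (substApply θK)^[k + 1] [false] = false :: false :: t ∧
      (substApply θK)^[k + 1] [true] = true :: (t ++ r) := by
  induction k with
  | zero => exact ⟨[true], [false, false, true], rfl, rfl⟩
  | succ k ih =>
    obtain ⟨t, r, hA, hB⟩ := ih
    refine ⟨[true, false, false, true] ++ substApply θK t, substApply θK r, ?_, ?_⟩
    · rw [Function.iterate_succ_apply', hA]
      simp [substApply, θK]
    · rw [Function.iterate_succ_apply', hB]
      simp [substApply, θK]

theorem IsFixPt.θK_apply_succ_eq {v : ℕ → Bool} (hv : IsFixPt θK true v)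
    (hu : IsFixPt θK false u) (i : ℕ) : v (i + 1) = u (i + 2) := by
  obtain ⟨t, r, hA, hB⟩ := exists_iterate_substApply_θK (i + 2)
  have hlen := lt_length_substApply_iterate one_lt_length_θK false (i + 3)
  rw [hA, List.length_cons, List.length_cons] at hlen
  have hi : i < t.length := by omega
  rw [hv.apply_eq_of_getElem?_eq (k := i + 3) (b := t[i])
      (by rw [hB]; simp [List.getElem?_append_left hi, hi]),
    hu.apply_eq_of_getElem?_eq (k := i + 3) (b := t[i]) (by rw [hA]; simp [hi])]

theorem signedCount_coincidence_θK {v : ℕ → Bool} (hu : IsFixPt θK false u)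
    (hv : IsFixPt θK true v) {n : ℕ} (hn : 0 < n) :
    signedCount (fun k => u k = v k) n = signedCount (fun k => u k = u (k + 1)) n - 2 := by
  obtain ⟨n, rfl⟩ : ∃ n', n = 1 + n' := ⟨n - 1, by omega⟩
  have hu1 : u 1 = false := hu.apply_eq_of_getElem?_eq (k := 1) rfl
  have htail : signedCount (fun j => u (1 + j) = v (1 + j)) n =
      signedCount (fun j => u (1 + j) = u (1 + j + 1)) n := by
    refine sum_congr rfl fun j _ => ?_
    simp only [add_comm 1 j, hv.θK_apply_succ_eq hu]
  rw [signedCount_add, signedCount_add, htail]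
  simp only [signedCount, range_one, sum_singleton, hu.apply_zero, hv.apply_zero,
    Bool.false_eq_true, ↓reduceIte, zero_add, hu1]
  ring

theorem IsFixPt.abs_signedCount_le_log_θK (hu : IsFixPt θK a u) (n : ℕ) :
    |signedCount (u · = true) n| ≤ 4 * (Nat.log 3 n + 2) := by
  refine abs_le_mul_log_add_two_of_descent (by norm_num) ?_ (fun n _ => ?_) n
  · simp [signedCount]
  obtain ⟨m, r, rfl, hr, hm⟩ := exists_eq_blockStart_θK_add u n
  refine ⟨m, by omega, ?_⟩
  calc |signedCount (u · = true) (blockStart θK u m + r)|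
      ≤ |signedCount (u · = true) (blockStart θK u m)| + r := abs_signedCount_add_le _ _ _
    _ ≤ |signedCount (u · = true) m| + 4 := by
      rw [hu.signedCount_blockStart_θK]
      gcongr
      exact_mod_cast hr

theorem IsFixPt.abs_signedCount_pairs_le_log_θK (hu : IsFixPt θK a u) (n : ℕ) :
    |signedCount (fun k => u k = u (k + 1)) n| ≤ 4 * Nat.log 3 n + 13 := by
  obtain ⟨m, r, rfl, hr, hm⟩ := exists_eq_blockStart_θK_add u n
  rcases Nat.eq_zero_or_pos (blockStart θK u m + r) with h0 | hpos
  · rw [h0]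
    simp [signedCount]
  have hlog : (Nat.log 3 (m + 1) : ℝ) ≤ Nat.log 3 (blockStart θK u m + r) := by
    exact_mod_cast Nat.log_mono_right (by omega)
  have hD := hu.abs_signedCount_le_log_θK (m + 1)
  have hD1 := abs_signedCount_le (u · = true) 1
  have hr' : (r : ℝ) ≤ 4 := by exact_mod_cast hr
  calc |signedCount (fun k => u k = u (k + 1)) (blockStart θK u m + r)|
      ≤ |signedCount (fun k => u k = u (k + 1)) (blockStart θK u m)| + r :=
        abs_signedCount_add_le _ _ _
    _ = |signedCount (u · = true) (m + 1) - signedCount (u · = true) 1| + r := by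
      rw [hu.signedCount_pairs_blockStart_θK]
    _ ≤ 4 * Nat.log 3 (blockStart θK u m + r) + 13 := by
      push_cast at hD hD1
      linarith [abs_sub (signedCount (u · = true) (m + 1)) (signedCount (u · = true) 1)]

end Kakutani

/-- For the Kakutani substitution `θ(0) = 001, θ(1) = 11001` with
fixed points `u* = θ^∞(0)`, `v* = θ^∞(1)`, the coincidence density
`δ_c = lim (1/n)·#{k ≤ n : u*_k = v*_k}` exists and equals `1/2`. -/
theorem kakutani_coincidence_density
    (u v : ℕ → Bool) (hu : IsFixPt θK false u) (hv : IsFixPt θK true v) :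
    Tendsto (fun n : ℕ =>
        (((Finset.range n).filter (fun k => u k = v k)).card : ℝ) / n)
      atTop (nhds (1 / 2)) := by
  have hbound (n : ℕ) : |signedCount (fun k => u k = v k) n| ≤ 4 * Nat.log 3 n + 15 := by
    rcases Nat.eq_zero_or_pos n with rfl | hn
    · simp [signedCount]
    rw [signedCount_coincidence_θK hu hv hn]
    linarith [abs_sub (signedCount (fun k => u k = u (k + 1)) n) 2, abs_two (α := ℝ),
      hu.abs_signedCount_pairs_le_log_θK n]
  exact tendsto_card_filter_div_of_signedCount _ (tendsto_div_natCast_of_abs_le_log hbound)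
end

section
/- Let θ: 0 ↦ 010, 1 ↦ 11010 with fixed points u* = θ^∞(0), v* = θ^∞(1). Then the coincidence density lim_{n→∞} (1/n)·Card{1 ≤ k ≤ n : u*_k = v*_k} does not exist. -/
/-!
Both `u` and `v` are cut into aligned pairs of equal-length words. Besides the trivial
coincidence blocks `(θᵏ(0), θᵏ(0))`, the decomposition uses skewed blocks `(skewU t, skewV t)`,
in which `v` lags two letters behind a rotated copy of `u`. Applying `θ` to a skewed block
gives, on both sides at once, the blocks of indices `0, t + 1, 0` followed by the coincidence
block `θ(0)`, and the two words of a skewed block are permutations of each other, so all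
`θᵏ`-images stay aligned. Solving the resulting linear recursions exactly, the coincidence
density along the prefix lengths `|θᵏ(skewU 0)| = (16·4ᵏ - 1)/3` is
`(10·4ᵏ - 1)/(16·4ᵏ - 1) ≥ 3/5`, while along `|θᵏ(skewU 0) θᵏ(skewU 1)| = (40·4ᵏ - 1)/3` it is
`(22·4ᵏ - 1)/(40·4ᵏ - 1) ≤ 11/20`.
-/

open Filter

/-- The substitution `θ : 0 ↦ 010, 1 ↦ 11010`. -/
def θS : Bool → List Bool := fun b =>
  if b then [true, true, false, true, false] else [false, true, false]

section Substitution

variable {α : Type*}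

theorem substApply_append (σ : α → List α) (a b : List α) :
    substApply σ (a ++ b) = substApply σ a ++ substApply σ b :=
  List.flatMap_append

theorem substApply_iterate_append (σ : α → List α) (k : ℕ) (a b : List α) :
    (substApply σ)^[k] (a ++ b) = (substApply σ)^[k] a ++ (substApply σ)^[k] b := by
  induction k generalizing a b with
  | zero => rfl
  | succ k ih => rw [Function.iterate_succ_apply, substApply_append, ih]; rfl

theorem List.IsPrefix.substApply_iterate {σ : α → List α} {a b : List α} (h : a <+: b) (k : ℕ) :
    (substApply σ)^[k] a <+: (substApply σ)^[k] b := by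
  induction k generalizing a b with
  | zero => exact h
  | succ k ih => exact ih (h.flatMap σ)

theorem substApply_substApply (σ τ : α → List α) (w : List α) :
    substApply σ (substApply τ w) = substApply (fun a => substApply σ (τ a)) w :=
  List.flatMap_assoc

theorem append_substApply_of_append_eq {σ τ : α → List α} {p : List α}
    (h : ∀ a, p ++ σ a = τ a ++ p) (w : List α) :
    p ++ substApply σ w = substApply τ w ++ p := by
  induction w with
  | nil => simp [substApply]
  | cons a w ih =>
    simp only [substApply, List.flatMap_cons] at ih ⊢
    rw [← List.append_assoc, h, List.append_assoc, ih, List.append_assoc]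

theorem List.sum_map_eq_sum_count [Fintype α] [DecidableEq α] (w : List α) (g : α → ℕ) :
    (w.map g).sum = ∑ a, w.count a * g a := by
  rw [Finset.sum_list_map_count]
  exact Finset.sum_subset (Finset.subset_univ _) fun a _ ha => by
    simp [List.count_eq_zero.2 (by simpa using ha)]

theorem length_substApply [Fintype α] [DecidableEq α] (σ : α → List α) (w : List α) :
    (substApply σ w).length = ∑ a, w.count a * (σ a).length := by
  rw [substApply, List.length_flatMap, List.sum_map_eq_sum_count]

theorem count_substApply [Fintype α] [DecidableEq α] (σ : α → List α) (w : List α) (b : α) :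
    (substApply σ w).count b = ∑ a, w.count a * (σ a).count b := by
  rw [substApply, List.count_flatMap, List.sum_map_eq_sum_count]
  rfl

theorem List.Perm.substApply_iterate {σ : α → List α} {a b : List α} (h : a.Perm b)
    (k : ℕ) : ((substApply σ)^[k] a).Perm ((substApply σ)^[k] b) := by
  induction k generalizing a b with
  | zero => exact h
  | succ k ih => exact ih (h.flatMap_right σ)

theorem iterate_succ_of_forall_substApply_eq {σ : α → List α} {F : ℕ → List α}
    {e : List α} (hF : ∀ t, substApply σ (F t) = F 0 ++ F (t + 1) ++ F 0 ++ e) (k t : ℕ) :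
    (substApply σ)^[k + 1] (F t) = (substApply σ)^[k] (F 0) ++ (substApply σ)^[k] (F (t + 1)) ++
      (substApply σ)^[k] (F 0) ++ (substApply σ)^[k] e := by
  rw [Function.iterate_succ_apply, hF]
  simp only [substApply_iterate_append]

theorem IsFixPt.getElem_eq {σ : α → List α} {a : α} {x : ℕ → α} (hx : IsFixPt σ a x) {k : ℕ}
    {w : List α} (hw : w <+: (substApply σ)^[k] [a]) (i : ℕ) (hi : i < w.length) :
    w[i] = x i := by
  rw [hx k i (hi.trans_le hw.length_le), hw.getElem hi]

end Substitution

section Coincidences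

variable {α : Type*} [DecidableEq α]

def coincidences (A B : List α) : ℕ := (A.zip B).countP fun p => p.1 = p.2

def coincidenceCount (u v : ℕ → α) (n : ℕ) : ℕ := ((Finset.range n).filter fun k => u k = v k).card

theorem coincidences_append {A B : List α} (C D : List α) (h : A.length = B.length) :
    coincidences (A ++ C) (B ++ D) = coincidences A B + coincidences C D := by
  rw [coincidences, List.zip_append h, List.countP_append]; rfl

theorem coincidences_self (A : List α) : coincidences A A = A.length := by
  induction A with
  | nil => rfl
  | cons a A ih => simpa [coincidences, List.countP_cons] using ih

theorem coincidenceCount_eq_coincidences_map_range (u v : ℕ → α) (n : ℕ) :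
    coincidenceCount u v n = coincidences ((List.range n).map u) ((List.range n).map v) := by
  induction n with
  | zero => rfl
  | succ n ih =>
    rw [List.range_succ, List.map_append, List.map_append,
      coincidences_append _ _ (by simp), ← ih, coincidenceCount, Finset.range_add_one,
      Finset.filter_insert]
    split_ifs with h <;> simp [coincidences, coincidenceCount, h]

theorem coincidenceCount_eq_coincidences {u v : ℕ → α} {A B : List α}
    (hA : ∀ i (h : i < A.length), A[i] = u i) (hB : ∀ i (h : i < B.length), B[i] = v i)
    (hAB : A.length = B.length) : coincidenceCount u v A.length = coincidences A B := by
  rw [coincidenceCount_eq_coincidences_map_range]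
  congr <;> apply List.ext_getElem <;> simp_all

end Coincidences

theorem not_exists_tendsto_of_subseq_bounds {α : Type*} [TopologicalSpace α] [LinearOrder α]
    [OrderClosedTopology α] {f : ℕ → α} {m n : ℕ → ℕ} {a b : α} (hab : a < b)
    (hm : Tendsto m atTop atTop) (hn : Tendsto n atTop atTop)
    (hfm : ∀ k, f (m k) ≤ a) (hfn : ∀ k, b ≤ f (n k)) :
    ¬ ∃ c, Tendsto f atTop (nhds c) := by
  rintro ⟨c, hc⟩
  exact hab.not_ge ((ge_of_tendsto' (hc.comp hn) hfn).trans (le_of_tendsto' (hc.comp hm) hfm))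

local notation "Θ" => substApply θS

def θrot : Bool → List Bool := fun b =>
  if b then [false, true, false, true, true] else [false, true, false]

-- Chosen so that `θrot ∘ ζ = θ ∘ θrot`, which makes the skewed blocks self-similar.
def ζ : Bool → List Bool := fun b =>
  if b then [true, false, true, true, false] else [true, false, false]

def skewIndex : ℕ → List Bool
  | 0 => [false]
  | t + 1 => (substApply ζ (skewIndex t)).tail

def skewU (t : ℕ) : List Bool := substApply θrot (skewIndex t) ++ [true, true]

def skewV (t : ℕ) : List Bool := [true, true] ++ Θ (skewIndex t)

theorem skewIndex_ne_nil (t : ℕ) : skewIndex t ≠ [] := by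
  induction t with
  | zero => simp [skewIndex]
  | succ t ih =>
    obtain ⟨a, w, hw⟩ := List.exists_cons_of_ne_nil ih
    cases a <;> simp [skewIndex, hw, substApply, ζ]

theorem substApply_ζ_skewIndex (t : ℕ) :
    substApply ζ (skewIndex t) = true :: skewIndex (t + 1) := by
  obtain ⟨a, w, hw⟩ := List.exists_cons_of_ne_nil (skewIndex_ne_nil t)
  simp only [skewIndex, hw]
  cases a <;> rfl

theorem substApply_θrot_ζ (w : List Bool) :
    substApply θrot (substApply ζ w) = Θ (substApply θrot w) := by
  rw [substApply_substApply, substApply_substApply]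
  congr 1
  funext a
  cases a <;> rfl

theorem append_substApply_ζ (w : List Bool) :
    Θ [true, false] ++ Θ (Θ w) = Θ (substApply ζ w) ++ Θ [true, false] := by
  rw [substApply_substApply, substApply_substApply]
  exact append_substApply_of_append_eq (fun a => by cases a <;> rfl) w

theorem substApply_skewU (t : ℕ) :
    Θ (skewU t) = skewU 0 ++ skewU (t + 1) ++ skewU 0 ++ Θ [false] := by
  rw [skewU, substApply_append, ← substApply_θrot_ζ, substApply_ζ_skewIndex]
  simp [skewU, skewIndex, substApply, θrot, θS]

theorem substApply_skewV (t : ℕ) :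
    Θ (skewV t) = skewV 0 ++ skewV (t + 1) ++ skewV 0 ++ Θ [false] := by
  have key : θS false ++ Θ (Θ (skewIndex t)) = Θ (skewIndex (t + 1)) ++ Θ [true, false] := by
    have h := append_substApply_ζ (skewIndex t)
    rw [substApply_ζ_skewIndex] at h
    simpa [substApply, θS] using h
  rw [skewV, substApply_append]
  simpa [skewV, skewIndex, substApply, θS] using key

theorem skewU_perm_skewV (t : ℕ) : (skewU t).Perm (skewV t) :=
  List.perm_append_comm.trans <| .append_left _ <|
    .flatMap_left _ fun a _ => by cases a <;> decide

theorem coincidences_substApply_θrot (z : List Bool) (s : Bool) :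
    coincidences (substApply θrot z ++ [true, true]) (true :: s :: Θ z) =
      z.length + 1 + s.toNat := by
  -- The last two letters `10` of each `θ`-block are compared with the next `θrot`-block.
  induction z generalizing s with
  | nil => cases s <;> rfl
  | cons a z ih =>
    cases a
    · show coincidences ([false, true, false] ++ (substApply θrot z ++ [true, true]))
        ([true, s, false] ++ (true :: false :: Θ z)) = _
      rw [coincidences_append _ _ (by simp), ih]
      cases s <;> simp [coincidences] <;> omega
    · show coincidences ([false, true, false, true, true] ++ (substApply θrot z ++ [true, true]))
        ([true, s, true, true, false] ++ (true :: false :: Θ z)) = _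
      rw [coincidences_append _ _ (by simp), ih]
      cases s <;> simp [coincidences] <;> omega

theorem coincidences_skewU_skewV (t : ℕ) :
    coincidences (skewU t) (skewV t) = (skewIndex t).length + 2 :=
  coincidences_substApply_θrot (skewIndex t) true

theorem length_count_skewIndex (t : ℕ) :
    9 * (skewIndex t).length = 2 * 4 ^ t + 3 * t + 7 ∧
      9 * (skewIndex t).count true + 3 * t + 1 = 4 ^ t := by
  induction t with
  | zero => exact ⟨rfl, rfl⟩
  | succ t ih =>
    have hlen : (skewIndex t).count true * 5 + (skewIndex t).count false * 3 =
        (skewIndex (t + 1)).length + 1 := by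
      simpa [length_substApply, ζ] using congrArg List.length (substApply_ζ_skewIndex t)
    have hcount : (skewIndex t).count true * 3 + (skewIndex t).count false =
        (skewIndex (t + 1)).count true + 1 := by
      simpa [count_substApply, ζ] using congrArg (List.count true) (substApply_ζ_skewIndex t)
    have := List.count_true_add_count_false (skewIndex t)
    rw [pow_succ]
    omega

theorem length_count_iterate_false (k : ℕ) :
    3 * (Θ^[k] [false]).length = 2 * 4 ^ k + 1 ∧ 3 * (Θ^[k] [false]).count true + 1 = 4 ^ k := by
  induction k with
  | zero => exact ⟨rfl, rfl⟩
  | succ k ih =>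
    have hlen : (Θ^[k + 1] [false]).length =
        (Θ^[k] [false]).count true * 5 + (Θ^[k] [false]).count false * 3 := by
      simp [Function.iterate_succ_apply', length_substApply, θS]
    have hcount : (Θ^[k + 1] [false]).count true =
        (Θ^[k] [false]).count true * 3 + (Θ^[k] [false]).count false := by
      simp [Function.iterate_succ_apply', count_substApply, θS]
    have := List.count_true_add_count_false (Θ^[k] [false])
    rw [pow_succ]
    omega

theorem length_skewU (t : ℕ) : 9 * (skewU t).length + 3 = 8 * 4 ^ t + 40 + 3 * t := by
  have hlen : (skewU t).length =
      (skewIndex t).count true * 5 + (skewIndex t).count false * 3 + 2 := by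
    simp [skewU, length_substApply, θrot]
  have := length_count_skewIndex t
  have := List.count_true_add_count_false (skewIndex t)
  omega

theorem iterate_skewU_succ (k t : ℕ) : Θ^[k + 1] (skewU t) = Θ^[k] (skewU 0) ++
    Θ^[k] (skewU (t + 1)) ++ Θ^[k] (skewU 0) ++ Θ^[k + 1] [false] :=
  iterate_succ_of_forall_substApply_eq substApply_skewU k t

theorem iterate_skewV_succ (k t : ℕ) : Θ^[k + 1] (skewV t) = Θ^[k] (skewV 0) ++
    Θ^[k] (skewV (t + 1)) ++ Θ^[k] (skewV 0) ++ Θ^[k + 1] [false] :=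
  iterate_succ_of_forall_substApply_eq substApply_skewV k t

theorem length_iterate_skewV (k t : ℕ) : (Θ^[k] (skewV t)).length = (Θ^[k] (skewU t)).length :=
  ((skewU_perm_skewV t).substApply_iterate k).length_eq.symm

theorem length_iterate_skewU (k t : ℕ) :
    9 * (Θ^[k] (skewU t)).length + 3 = 8 * 4 ^ (t + k) + 40 * 4 ^ k + 3 * t := by
  induction k generalizing t with
  | zero => simpa using length_skewU t
  | succ k ih =>
    have h₀ := ih 0
    have h₁ := ih (t + 1)
    have he := (length_count_iterate_false (k + 1)).1
    rw [zero_add, mul_zero, add_zero] at h₀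
    rw [show t + 1 + k = t + (k + 1) by omega] at h₁
    rw [iterate_skewU_succ, List.length_append, List.length_append, List.length_append,
      pow_succ 4 k]
    rw [pow_succ 4 k] at he
    omega

theorem coincidences_iterate_skewU_skewV (k t : ℕ) :
    9 * coincidences (Θ^[k] (skewU t)) (Θ^[k] (skewV t)) + 3 =
      2 * 4 ^ (t + k) + 28 * 4 ^ k + 3 * t := by
  induction k generalizing t with
  | zero =>
    have := (length_count_skewIndex t).1
    rw [Function.iterate_zero_apply, Function.iterate_zero_apply, coincidences_skewU_skewV]
    simp only [add_zero, pow_zero]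
    omega
  | succ k ih =>
    have h₀ := ih 0
    have h₁ := ih (t + 1)
    have he := (length_count_iterate_false (k + 1)).1
    rw [zero_add, mul_zero, add_zero] at h₀
    rw [show t + 1 + k = t + (k + 1) by omega] at h₁
    rw [iterate_skewU_succ, iterate_skewV_succ,
      coincidences_append _ _ (by simp [length_iterate_skewV]),
      coincidences_append _ _ (by simp [length_iterate_skewV]),
      coincidences_append _ _ (length_iterate_skewV k _).symm, coincidences_self,
      pow_succ 4 k]
    rw [pow_succ 4 k] at he
    omega

theorem iterate_skewU_zero_prefix (k : ℕ) : Θ^[k] (skewU 0) <+: Θ^[k + 2] [false] := by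
  rw [Function.iterate_add_apply]
  exact (show skewU 0 <+: Θ^[2] [false] by decide).substApply_iterate k

theorem iterate_skewV_zero_prefix (k : ℕ) : Θ^[k] (skewV 0) <+: Θ^[k + 1] [true] := by
  rw [Function.iterate_succ_apply]
  exact List.prefix_refl _

theorem iterate_skewU_zero_append_one_prefix (k : ℕ) :
    Θ^[k] (skewU 0) ++ Θ^[k] (skewU 1) <+: Θ^[k + 3] [false] := by
  refine List.IsPrefix.trans ?_ (iterate_skewU_zero_prefix (k + 1))
  rw [iterate_skewU_succ]
  simp [List.append_assoc]

theorem iterate_skewV_zero_append_one_prefix (k : ℕ) :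
    Θ^[k] (skewV 0) ++ Θ^[k] (skewV 1) <+: Θ^[k + 2] [true] := by
  refine List.IsPrefix.trans ?_ (iterate_skewV_zero_prefix (k + 1))
  rw [iterate_skewV_succ]
  simp [List.append_assoc]

theorem tendsto_length_iterate_skewU_zero :
    Tendsto (fun k => (Θ^[k] (skewU 0)).length) atTop atTop := by
  refine tendsto_atTop_mono (fun k => ?_) (tendsto_pow_atTop_atTop_of_one_lt (by norm_num : 1 < 4))
  have := length_iterate_skewU k 0
  simp only [zero_add, mul_zero, add_zero] at this
  omega

theorem tendsto_length_iterate_skewU_zero_append_one :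
    Tendsto (fun k => (Θ^[k] (skewU 0) ++ Θ^[k] (skewU 1)).length) atTop atTop :=
  tendsto_atTop_mono (fun k => by simp) tendsto_length_iterate_skewU_zero

theorem three_fifths_le_coincidenceCount_div {u v : ℕ → Bool} (hu : IsFixPt θS false u)
    (hv : IsFixPt θS true v) (k : ℕ) :
    (3 : ℝ) / 5 ≤ coincidenceCount u v (Θ^[k] (skewU 0)).length / (Θ^[k] (skewU 0)).length := by
  rw [coincidenceCount_eq_coincidences (hu.getElem_eq (iterate_skewU_zero_prefix k))
    (hv.getElem_eq (iterate_skewV_zero_prefix k)) (length_iterate_skewV k 0).symm]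
  have hc := coincidences_iterate_skewU_skewV k 0
  have hl := length_iterate_skewU k 0
  have hk := Nat.one_le_pow k 4 (by norm_num)
  simp only [zero_add, mul_zero, add_zero] at hc hl
  rw [div_le_div_iff₀ (by norm_num) (by norm_cast; omega)]
  exact_mod_cast (by omega : 3 * (Θ^[k] (skewU 0)).length ≤
    coincidences (Θ^[k] (skewU 0)) (Θ^[k] (skewV 0)) * 5)

theorem coincidenceCount_div_le_eleven_twentieths {u v : ℕ → Bool} (hu : IsFixPt θS false u)
    (hv : IsFixPt θS true v) (k : ℕ) :
    (coincidenceCount u v (Θ^[k] (skewU 0) ++ Θ^[k] (skewU 1)).length : ℝ) /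
      (Θ^[k] (skewU 0) ++ Θ^[k] (skewU 1)).length ≤ 11 / 20 := by
  rw [coincidenceCount_eq_coincidences (hu.getElem_eq (iterate_skewU_zero_append_one_prefix k))
    (hv.getElem_eq (iterate_skewV_zero_append_one_prefix k))
    (by simp [length_iterate_skewV]),
    coincidences_append _ _ (length_iterate_skewV k 0).symm]
  have hc₀ := coincidences_iterate_skewU_skewV k 0
  have hc₁ := coincidences_iterate_skewU_skewV k 1
  have hl₀ := length_iterate_skewU k 0
  have hl₁ := length_iterate_skewU k 1
  have hk := Nat.one_le_pow k 4 (by norm_num)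
  rw [add_comm 1 k, pow_succ] at hc₁ hl₁
  simp only [zero_add, mul_zero, add_zero, List.length_append] at hc₀ hl₀ ⊢
  rw [div_le_div_iff₀ (by norm_cast; omega) (by norm_num)]
  exact_mod_cast (by omega : (coincidences (Θ^[k] (skewU 0)) (Θ^[k] (skewV 0)) +
    coincidences (Θ^[k] (skewU 1)) (Θ^[k] (skewV 1))) * 20 ≤
    11 * ((Θ^[k] (skewU 0)).length + (Θ^[k] (skewU 1)).length))

/-- **application of the main theorem.** For `θ : 0 ↦ 010, 1 ↦ 11010`
with fixed points `u* = θ^∞(0)`, `v* = θ^∞(1)`, the coincidence density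
`lim (1/n)·#{k ≤ n : u*_k = v*_k}` does not exist. -/
theorem salem_coincidence_density_does_not_exist
    (u v : ℕ → Bool) (hu : IsFixPt θS false u) (hv : IsFixPt θS true v) :
    ¬ ∃ c : ℝ, Tendsto (fun n : ℕ =>
        (((Finset.range n).filter (fun k => u k = v k)).card : ℝ) / n)
      atTop (nhds c) :=
  not_exists_tendsto_of_subseq_bounds (by norm_num : (11 : ℝ) / 20 < 3 / 5)
    tendsto_length_iterate_skewU_zero_append_one tendsto_length_iterate_skewU_zero
    (coincidenceCount_div_le_eleven_twentieths hu hv) (three_fifths_le_coincidenceCount_div hu hv)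
end
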